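/- Let α = (a₀,a₁,a₂,b₀,b₁,b₂) ∈ ℂ⁶ satisfy 27·a₀² + 4·b₀³ = 0. Then there exists a nonzero point p ∈ ℂ⁴ at which all four partial derivatives of G_α vanish; i.e., the cubic surface {G_α = 0} ⊂ ℙ³ is singular. (This shows that each of the three hypersurfaces 27aᵢ² + 4bᵢ³ = 0 of the Luna slice is contained in the discriminant; near the origin the discriminant is exactly the union of these three hypersurfaces.) -/
import Mathlib


open MvPolynomial

/-- The family of cubic forms parameterizing the Luna slice at the 3A₂ cubic:
G_α = a₀x₀³ + a₁x₁³ + a₂x₂³ + b₀x₀²x₃ + b₁x₁²x₃ + b₂x₂²x₃ + x₀x₁x₂ + x₃³. -/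
noncomputable def lunaFamily (a b : Fin 3 → ℂ) : MvPolynomial (Fin 4) ℂ :=
  C (a 0) * X 0 ^ 3 + C (a 1) * X 1 ^ 3 + C (a 2) * X 2 ^ 3 +
  C (b 0) * X 0 ^ 2 * X 3 + C (b 1) * X 1 ^ 2 * X 3 + C (b 2) * X 2 ^ 2 * X 3 +
  X 0 * X 1 * X 2 + X 3 ^ 3

/-- Auxiliary: if `t` satisfies `2b₀t = -3a₀` and `3t² = -b₀`, then `(1,0,0,t)` is a
common zero of the four partial derivatives of `G`. -/
lemma luna_singular_point (a b : Fin 3 → ℂ) (t : ℂ) (ht1 : 2 * b 0 * t = -(3 * a 0))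
    (ht2 : 3 * t ^ 2 = -(b 0)) (i : Fin 4) :
    MvPolynomial.eval ![1,0,0,t] (MvPolynomial.pderiv i (lunaFamily a b)) = 0 := by
  fin_cases i
  · simp [lunaFamily, pderiv_X, Derivation.leibniz, Derivation.leibniz_pow]
    linear_combination ht1
  · simp [lunaFamily, pderiv_X, Derivation.leibniz, Derivation.leibniz_pow]
  · simp [lunaFamily, pderiv_X, Derivation.leibniz, Derivation.leibniz_pow]
  · simp [lunaFamily, pderiv_X, Derivation.leibniz, Derivation.leibniz_pow]
    linear_combination ht2

/-- The hypersurface 27a₀² + 4b₀³ = 0 of the Luna slice is contained in the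
discriminant: if 27a₀² + 4b₀³ = 0, then the cubic surface {G_α = 0} ⊂ ℙ³ is singular,
i.e. the four partial derivatives of G_α have a common nonzero zero in ℂ⁴. -/
theorem cusp_hypersurface_in_discriminant (a b : Fin 3 → ℂ)
    (h : 27 * (a 0) ^ 2 + 4 * (b 0) ^ 3 = 0) :
    ∃ p : Fin 4 → ℂ, p ≠ 0 ∧
      ∀ i : Fin 4, MvPolynomial.eval p (MvPolynomial.pderiv i (lunaFamily a b)) = 0 := by
  obtain ⟨t, ht1, ht2⟩ : ∃ t : ℂ, 2 * b 0 * t = -(3 * a 0) ∧ 3 * t ^ 2 = -(b 0) := by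
    by_cases hb : b 0 = 0
    · have ha : a 0 = 0 := by
        have : (a 0) ^ 2 = 0 := by
          have := h; rw [hb] at this
          have h27 : (27 : ℂ) * (a 0) ^ 2 = 0 := by linear_combination this
          have := mul_eq_zero.mp h27
          rcases this with h' | h'
          · exact absurd h' (by norm_num)
          · exact h'
        exact pow_eq_zero_iff (n := 2) (by norm_num) |>.mp this
      exact ⟨0, by simp [hb, ha], by simp [hb]⟩
    · refine ⟨-(3 * a 0) / (2 * b 0), ?_, ?_⟩
      · field_simp
      · field_simp
        linear_combination h
  refine ⟨![1, 0, 0, t], ?_, luna_singular_point a b t ht1 ht2⟩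
  intro hp
  have := congrFun hp 0
  simp at this
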